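/- The intertwining sequence of the factor 101 in the Thue-Morse word is (ABBA)^ω: listing in increasing order all positions where 101 or 010 occurs, the sequence of labels (A for 101, B for 010) is the periodic sequence ABBAABBAABBA.... -/

import Mathlib

/-!
An occurrence of `101` or `010` at `j` is a position with `t(j) ≠ t(j+1) ≠ t(j+2)`, and it is
labelled `A` exactly when `t(j) = 1`. Since `t(4n), …, t(4n+3)` reads `t(n), 1-t(n), 1-t(n), t(n)`,
the occurrences are the pairs `4n+2, 4n+3` for the `n` with `t(n) ≠ t(n+1)`, labelled
`1-t(n), t(n)`. If `c` letter changes of `t` occur before `n`, the pair sits at indices `2c, 2c+1`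
of the intertwining sequence, and `t(n) = c mod 2`; so the pair reads `AB` for even `c` and `BA`
for odd `c`.
-/

open scoped Classical

/-- The Thue-Morse word: parity of the binary digit sum. -/
def tm (n : ℕ) : ℕ := (Nat.digits 2 n).sum % 2

/-- `t[j..j+n-1] = t[i..i+n-1]` : an occurrence at `j` of the factor `t[i..i+n-1]`. -/
def feq (i j n : ℕ) : Prop := ∀ k < n, tm (j + k) = tm (i + k)

/-- `t[j..j+n-1]` is the binary complement of `t[i..i+n-1]`. -/
def feqc (i j n : ℕ) : Prop := ∀ k < n, tm (j + k) = 1 - tm (i + k)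

/-- Positions of occurrences of `x = t[i..i+n-1]` or its complement. -/
def occSet (i n : ℕ) : ℕ → Prop := fun j => feq i j n ∨ feqc i j n

/-- The intertwining sequence of `x = t[i..i+n-1]`: at index `m`, the label of the
`m`-th (in increasing order of position) occurrence of `x` or its complement;
`0` codes `A` (an occurrence of `x`), `1` codes `B` (an occurrence of the complement). -/
noncomputable def itw (i n m : ℕ) : ℕ :=
  if feq i (Nat.nth (occSet i n) m) n then 0 else 1

/-- The intertwining sequence is `(AB)^ω`. -/
def ABpat (i n : ℕ) : Prop := ∀ m, itw i n m = m % 2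

/-- The intertwining sequence is `(BA)^ω`. -/
def BApat (i n : ℕ) : Prop := ∀ m, itw i n m = (m + 1) % 2

/-- The intertwining sequence is `(ABBA)^ω`. -/
def ABBApat (i n : ℕ) : Prop :=
  ∀ m, itw i n m = if m % 4 = 0 ∨ m % 4 = 3 then 0 else 1

/-- The intertwining sequence is `(BAAB)^ω`. -/
def BAABpat (i n : ℕ) : Prop :=
  ∀ m, itw i n m = if m % 4 = 0 ∨ m % 4 = 3 then 1 else 0

/-- The length-`n` factor of the Thue-Morse word starting at position `i`, as a word. -/
def fac (i n : ℕ) : List ℕ := (List.range n).map (fun k => tm (i + k))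

lemma tm_lt_two (n : ℕ) : tm n < 2 := Nat.mod_lt _ two_pos

lemma tm_two_mul (n : ℕ) : tm (2 * n) = tm n := by
  rcases Nat.eq_zero_or_pos n with rfl | hn
  · rfl
  · rw [tm, tm, Nat.digits_def' one_lt_two (by omega)]
    simp

lemma tm_two_mul_add_one (n : ℕ) : tm (2 * n + 1) = 1 - tm n := by
  rw [tm, tm, Nat.digits_def' one_lt_two (by omega), List.sum_cons,
    show (2 * n + 1) % 2 = 1 by omega, show (2 * n + 1) / 2 = n by omega]
  omega

lemma tm_four_mul (n : ℕ) : tm (4 * n) = tm n := by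
  rw [show 4 * n = 2 * (2 * n) by ring, tm_two_mul, tm_two_mul]

lemma tm_four_mul_add_one (n : ℕ) : tm (4 * n + 1) = 1 - tm n := by
  rw [show 4 * n + 1 = 2 * (2 * n) + 1 by ring, tm_two_mul_add_one, tm_two_mul]

lemma tm_four_mul_add_two (n : ℕ) : tm (4 * n + 2) = 1 - tm n := by
  rw [show 4 * n + 2 = 2 * (2 * n + 1) by ring, tm_two_mul, tm_two_mul_add_one]

lemma tm_four_mul_add_three (n : ℕ) : tm (4 * n + 3) = tm n := by
  have := tm_lt_two n
  rw [show 4 * n + 3 = 2 * (2 * n + 1) + 1 by ring, tm_two_mul_add_one, tm_two_mul_add_one]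
  omega

def tmFlip (n : ℕ) : Prop := tm n ≠ tm (n + 1)

lemma eq_count_ne_succ_mod_two {s : ℕ → ℕ} (hs : ∀ n, s n < 2) (n : ℕ) :
    s n = (s 0 + Nat.count (fun k => s k ≠ s (k + 1)) n) % 2 := by
  induction n with
  | zero => simp [Nat.mod_eq_of_lt (hs 0)]
  | succ n ih =>
    have := hs n
    have := hs (n + 1)
    rw [Nat.count_succ]
    split_ifs <;> omega

lemma tm_eq_count_tmFlip_mod_two (n : ℕ) : tm n = Nat.count tmFlip n % 2 := by
  have h := eq_count_ne_succ_mod_two tm_lt_two n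
  rw [show tm 0 = 0 from rfl, zero_add] at h
  convert h using 3
  rfl

lemma occSet_two_three_iff (j : ℕ) : occSet 2 3 j ↔ tmFlip j ∧ tmFlip (j + 1) := by
  have := tm_lt_two j
  have := tm_lt_two (j + 1)
  have := tm_lt_two (j + 2)
  have h2 : tm 2 = 1 := by decide
  have h3 : tm 3 = 0 := by decide
  have h4 : tm 4 = 1 := by decide
  simp only [occSet, feq, feqc, tmFlip, Nat.forall_lt_succ_right, Nat.not_lt_zero]
  simp only [h2, h3, h4, add_zero, add_assoc, Nat.reduceAdd, false_implies, implies_true, true_and]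
  omega

lemma occSet_two_three_iff_mod_four (j : ℕ) :
    occSet 2 3 j ↔ (j % 4 = 2 ∨ j % 4 = 3) ∧ tmFlip (j / 4) := by
  obtain ⟨n, r, hr, rfl⟩ : ∃ n r, r < 4 ∧ j = 4 * n + r :=
    ⟨j / 4, j % 4, Nat.mod_lt j four_pos, (Nat.div_add_mod j 4).symm⟩
  have := tm_lt_two n
  have := tm_lt_two (n + 1)
  rw [occSet_two_three_iff, tmFlip, tmFlip, tmFlip, show (4 * n + r) % 4 = r by omega,
    show (4 * n + r) / 4 = n by omega]
  interval_cases r <;>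
    simp only [add_assoc, Nat.reduceAdd, add_zero, tm_four_mul, tm_four_mul_add_one,
      tm_four_mul_add_two, tm_four_mul_add_three, show 4 * n + 4 = 4 * (n + 1) by ring,
      true_or, or_true, true_and] <;>
    constructor <;> intro h <;> omega

lemma exists_of_occSet_two_three {j : ℕ} (hj : occSet 2 3 j) :
    ∃ n, tmFlip n ∧ (j = 4 * n + 2 ∨ j = 4 * n + 3) := by
  rw [occSet_two_three_iff_mod_four] at hj
  exact ⟨j / 4, hj.2, by omega⟩

lemma occSet_two_three_infinite : (Set.ofPred (occSet 2 3)).Infinite := by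
  refine Set.infinite_of_injective_forall_mem (f := fun n => 4 * (4 * n) + 2)
    (fun a b hab => by simpa using hab) fun n => ?_
  have := tm_lt_two n
  refine (occSet_two_three_iff_mod_four _).2 ⟨by omega, ?_⟩
  rw [show (4 * (4 * n) + 2) / 4 = 4 * n by omega, tmFlip, tm_four_mul, tm_four_mul_add_one]
  omega

lemma count_occSet_two_three_four_mul (n : ℕ) :
    Nat.count (occSet 2 3) (4 * n) = 2 * Nat.count tmFlip n := by
  induction n with
  | zero => simp
  | succ n ih =>
    rw [show 4 * (n + 1) = 4 * n + 4 by ring, Nat.count_add, ih]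
    by_cases hn : tmFlip n <;>
      simp [Nat.count_succ, occSet_two_three_iff_mod_four, Nat.mul_add_div four_pos, hn, mul_add]

lemma count_occSet_two_three_four_mul_add_two (n : ℕ) :
    Nat.count (occSet 2 3) (4 * n + 2) = 2 * Nat.count tmFlip n := by
  rw [Nat.count_add, count_occSet_two_three_four_mul]
  simp [Nat.count_succ, occSet_two_three_iff_mod_four, Nat.mul_add_div four_pos]

lemma count_occSet_two_three_four_mul_add_three {n : ℕ} (hn : tmFlip n) :
    Nat.count (occSet 2 3) (4 * n + 3) = 2 * Nat.count tmFlip n + 1 := by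
  rw [Nat.count_add, count_occSet_two_three_four_mul]
  simp [Nat.count_succ, occSet_two_three_iff_mod_four, Nat.mul_add_div four_pos, hn]

lemma feq_two_three_iff {j : ℕ} (hj : occSet 2 3 j) : feq 2 j 3 ↔ tm j = 1 := by
  have h2 : tm 2 = 1 := by decide
  refine ⟨fun h => h2 ▸ h 0 (by norm_num), fun h => hj.resolve_right fun hc => ?_⟩
  have := hc 0 (by norm_num)
  simp only [add_zero, h, h2] at this
  omega

/-- The intertwining sequence of the factor 101 = t[2..4] is (ABBA)^ω. -/
theorem tm_itw_101 : ABBApat 2 3 := by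
  intro m
  have hj := Nat.nth_mem_of_infinite occSet_two_three_infinite m
  have hm := Nat.count_nth_of_infinite occSet_two_three_infinite m
  rw [itw, feq_two_three_iff hj]
  obtain ⟨n, hn, hj | hj⟩ := exists_of_occSet_two_three hj <;> rw [hj] at hm ⊢
  · rw [count_occSet_two_three_four_mul_add_two] at hm
    rw [tm_four_mul_add_two, tm_eq_count_tmFlip_mod_two n]
    split_ifs <;> omega
  · rw [count_occSet_two_three_four_mul_add_three hn] at hm
    rw [tm_four_mul_add_three, tm_eq_count_tmFlip_mod_two n]
    split_ifs <;> omega
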